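/- Let 2/3 < ν < 4/5 and define S_SG^{21}(ζ) := [tan((ζ + 3iπν/2)/(2i)) / tan((ζ − 3iπν/2)/(2i))] · [tan((ζ + iπν/2)/(2i)) / tan((ζ − iπν/2)/(2i))]. Then in the physical strip {ζ ∈ ℂ : 0 < Im ζ < π} the function S_SG^{21} is meromorphic with exactly two poles, located at ζ = iπν/2 and ζ = iπ(1 − ν/2), and both poles are simple; at every other point of the strip S_SG^{21} is holomorphic. -/
import Mathlib


open Complex Filter Topology

/-- The sine-Gordon (b₂b₁) breather–breather scattering function. -/
noncomputable def SSG21 (ν : ℝ) (ζ : ℂ) : ℂ :=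
  (Complex.tan ((ζ + Complex.I * (Real.pi : ℂ) * (ν : ℂ) * 3 / 2) / (2 * Complex.I)) /
   Complex.tan ((ζ - Complex.I * (Real.pi : ℂ) * (ν : ℂ) * 3 / 2) / (2 * Complex.I))) *
  (Complex.tan ((ζ + Complex.I * (Real.pi : ℂ) * (ν : ℂ) / 2) / (2 * Complex.I)) /
   Complex.tan ((ζ - Complex.I * (Real.pi : ℂ) * (ν : ℂ) / 2) / (2 * Complex.I)))

/-- Numerator of `SSG21` written as a product of sines and cosines. -/
noncomputable def ssgNum (ν : ℝ) (ζ : ℂ) : ℂ :=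
  Complex.sin ((ζ + Complex.I * (Real.pi : ℂ) * (ν : ℂ) * 3 / 2) / (2 * Complex.I)) *
  Complex.cos ((ζ - Complex.I * (Real.pi : ℂ) * (ν : ℂ) * 3 / 2) / (2 * Complex.I)) *
  (Complex.sin ((ζ + Complex.I * (Real.pi : ℂ) * (ν : ℂ) / 2) / (2 * Complex.I)) *
   Complex.cos ((ζ - Complex.I * (Real.pi : ℂ) * (ν : ℂ) / 2) / (2 * Complex.I)))

/-- Denominator of `SSG21` written as a product of sines and cosines. -/
noncomputable def ssgDen (ν : ℝ) (ζ : ℂ) : ℂ :=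
  Complex.cos ((ζ + Complex.I * (Real.pi : ℂ) * (ν : ℂ) * 3 / 2) / (2 * Complex.I)) *
  Complex.sin ((ζ - Complex.I * (Real.pi : ℂ) * (ν : ℂ) * 3 / 2) / (2 * Complex.I)) *
  (Complex.cos ((ζ + Complex.I * (Real.pi : ℂ) * (ν : ℂ) / 2) / (2 * Complex.I)) *
   Complex.sin ((ζ - Complex.I * (Real.pi : ℂ) * (ν : ℂ) / 2) / (2 * Complex.I)))

private lemma aux_div_div (a b c d : ℂ) : a/b/(c/d) = a*d/(b*c) := by
  rw [div_div_eq_mul_div, div_mul_eq_mul_div, div_div]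

private lemma aux_split (x n g h : ℂ) : x*(n/(g*h)) = (n/g)*(x/h) := by
  rw [div_mul_div_comm, mul_div_assoc', mul_comm x n]

lemma SSG21_eq (ν : ℝ) (ζ : ℂ) : SSG21 ν ζ = ssgNum ν ζ / ssgDen ν ζ := by
  unfold SSG21 ssgNum ssgDen
  rw [Complex.tan_eq_sin_div_cos, Complex.tan_eq_sin_div_cos, Complex.tan_eq_sin_div_cos,
    Complex.tan_eq_sin_div_cos, aux_div_div, aux_div_div, div_mul_div_comm]

lemma ssgNum_cont (ν : ℝ) : Continuous (ssgNum ν) := by unfold ssgNum; fun_prop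

lemma ssgNum_diff (ν : ℝ) : Differentiable ℂ (ssgNum ν) := by unfold ssgNum; fun_prop

lemma ssgDen_diff (ν : ℝ) : Differentiable ℂ (ssgDen ν) := by unfold ssgDen; fun_prop

private lemma h2I : (2 * Complex.I : ℂ) ≠ 0 := by simp [Complex.I_ne_zero]

private lemma sin_ofReal_ne {x : ℝ} (h : Real.sin x ≠ 0) : Complex.sin (x:ℂ) ≠ 0 := by
  rw [← Complex.ofReal_sin]; exact_mod_cast h

private lemma cos_ofReal_ne {x : ℝ} (h : Real.cos x ≠ 0) : Complex.cos (x:ℂ) ≠ 0 := by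
  rw [← Complex.ofReal_cos]; exact_mod_cast h

private lemma int_zero {k : ℤ} (h1 : (k:ℝ) < 1) (h2 : (-1:ℝ) < k) : k = 0 := by
  have a : k < 1 := by exact_mod_cast h1
  have b : -1 < k := by exact_mod_cast h2
  omega

/-- key limit: (ζ - p) / sin ((ζ - p)/(2i)) → 2i. -/
lemma key_limit (p : ℂ) :
    Tendsto (fun ζ : ℂ => (ζ - p) / Complex.sin ((ζ - p) / (2 * Complex.I)))
      (𝓝[≠] p) (𝓝 (2 * Complex.I)) := by
  have hsin : Tendsto (fun w : ℂ => Complex.sin w / w) (𝓝[≠] (0:ℂ)) (𝓝 1) := by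
    have h := Complex.hasDerivAt_sin 0
    rw [hasDerivAt_iff_tendsto_slope] at h
    simp only [Complex.cos_zero] at h
    exact h.congr fun w => by rw [slope_def_field, Complex.sin_zero, sub_zero, sub_zero]
  have hw : Tendsto (fun w : ℂ => w / Complex.sin w) (𝓝[≠] (0:ℂ)) (𝓝 1) := by
    have := hsin.inv₀ one_ne_zero
    simpa [inv_div] using this
  have hφ : Tendsto (fun ζ : ℂ => (ζ - p)/(2*Complex.I)) (𝓝[≠] p) (𝓝[≠] (0:ℂ)) := by
    rw [tendsto_nhdsWithin_iff]
    constructor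
    · have hc : Continuous fun ζ : ℂ => (ζ - p)/(2*Complex.I) := by fun_prop
      have h0 : Tendsto (fun ζ : ℂ => (ζ - p)/(2*Complex.I)) (𝓝[≠] p) (𝓝 ((p - p)/(2*Complex.I))) :=
        (hc.tendsto p).mono_left nhdsWithin_le_nhds
      simpa using h0
    · filter_upwards [self_mem_nhdsWithin] with ζ hζ
      exact div_ne_zero (sub_ne_zero.2 hζ) h2I
  have hcomp := (hw.comp hφ).const_mul (2*Complex.I)
  rw [mul_one] at hcomp
  refine hcomp.congr fun ζ => ?_
  show 2*Complex.I * ((ζ - p)/(2*Complex.I) / Complex.sin ((ζ - p)/(2*Complex.I))) = _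
  rw [mul_div_assoc', mul_div_assoc', mul_div_cancel_left₀ _ h2I]

/-- in the physical strip 0 < Im ζ < π, S_SG²¹ is holomorphic away from
the two points iπν/2 and iπ(1 − ν/2), and at each of these two points it has a simple
pole (the limit of (ζ − p)·S_SG²¹(ζ) exists and is nonzero). -/
theorem SSG21_poles_in_strip (ν : ℝ) (h1 : 2/3 < ν) (h2 : ν < 4/5) :
    (∀ ζ : ℂ, 0 < ζ.im → ζ.im < Real.pi →
      ζ ≠ Complex.I * (Real.pi : ℂ) * (ν : ℂ) / 2 →
      ζ ≠ Complex.I * (Real.pi : ℂ) * ((1 - ν/2 : ℝ) : ℂ) →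
      AnalyticAt ℂ (SSG21 ν) ζ) ∧
    (∃ r : ℂ, r ≠ 0 ∧ Filter.Tendsto
      (fun ζ : ℂ => (ζ - Complex.I * (Real.pi : ℂ) * (ν : ℂ) / 2) * SSG21 ν ζ)
      (𝓝[≠] (Complex.I * (Real.pi : ℂ) * (ν : ℂ) / 2)) (𝓝 r)) ∧
    (∃ r : ℂ, r ≠ 0 ∧ Filter.Tendsto
      (fun ζ : ℂ => (ζ - Complex.I * (Real.pi : ℂ) * ((1 - ν/2 : ℝ) : ℂ)) * SSG21 ν ζ)
      (𝓝[≠] (Complex.I * (Real.pi : ℂ) * ((1 - ν/2 : ℝ) : ℂ))) (𝓝 r)) := by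
  have hπ := Real.pi_pos
  set p₁ : ℂ := Complex.I * (Real.pi : ℂ) * (ν : ℂ) / 2 with hp₁def
  set p₂ : ℂ := Complex.I * (Real.pi : ℂ) * ((1 - ν/2 : ℝ) : ℂ) with hp₂def
  have hfun : SSG21 ν = fun ζ => ssgNum ν ζ / ssgDen ν ζ := funext fun ζ => SSG21_eq ν ζ
  -- real trigonometric facts
  have hsπν : Real.sin (Real.pi * ν) ≠ 0 :=
    ne_of_gt (Real.sin_pos_of_pos_of_lt_pi (by nlinarith) (by nlinarith))
  have hcπν : Real.cos (Real.pi * ν) ≠ 0 :=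
    ne_of_lt (Real.cos_neg_of_pi_div_two_lt_of_lt (by nlinarith) (by nlinarith))
  have hsπν2 : Real.sin (Real.pi * ν / 2) ≠ 0 :=
    ne_of_gt (Real.sin_pos_of_pos_of_lt_pi (by nlinarith) (by nlinarith))
  have hcπν2 : Real.cos (Real.pi * ν / 2) ≠ 0 :=
    ne_of_gt (Real.cos_pos_of_mem_Ioo ⟨by nlinarith, by nlinarith⟩)
  have hsA2 : Real.sin (Real.pi * (1 + ν) / 2) ≠ 0 :=
    ne_of_gt (Real.sin_pos_of_pos_of_lt_pi (by nlinarith) (by nlinarith))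
  have hcA2 : Real.cos (Real.pi * (1 + ν) / 2) ≠ 0 :=
    ne_of_lt (Real.cos_neg_of_pi_div_two_lt_of_lt (by nlinarith) (by nlinarith))
  have hsB2 : Real.sin (Real.pi * (1 - 2*ν) / 2) ≠ 0 :=
    ne_of_lt (Real.sin_neg_of_neg_of_neg_pi_lt (by nlinarith) (by nlinarith))
  have hcB2 : Real.cos (Real.pi * (1 - 2*ν) / 2) ≠ 0 :=
    ne_of_gt (Real.cos_pos_of_mem_Ioo ⟨by nlinarith, by nlinarith⟩)
  have hsC2 : Real.sin (Real.pi / 2) ≠ 0 := by rw [Real.sin_pi_div_two]; norm_num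
  have hsD2 : Real.sin (Real.pi * (1 - ν) / 2) ≠ 0 :=
    ne_of_gt (Real.sin_pos_of_pos_of_lt_pi (by nlinarith) (by nlinarith))
  have hcD2 : Real.cos (Real.pi * (1 - ν) / 2) ≠ 0 :=
    ne_of_gt (Real.cos_pos_of_mem_Ioo ⟨by nlinarith, by nlinarith⟩)
  refine ⟨?_, ?_, ?_⟩
  · -- analyticity away from the poles
    intro ζ ha hb hq1 hq2
    have fac1 : Complex.cos ((ζ + Complex.I * (Real.pi : ℂ) * ν * 3 / 2) / (2 * Complex.I)) ≠ 0 := by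
      intro h
      rw [Complex.cos_eq_zero_iff] at h
      obtain ⟨k, hk⟩ := h
      rw [div_eq_iff h2I] at hk
      have hζ : ζ = (((2*(k:ℝ)+1)*Real.pi - 3*Real.pi*ν/2 : ℝ) : ℂ) * Complex.I := by
        push_cast
        linear_combination hk
      have him : ζ.im = (2*(k:ℝ)+1)*Real.pi - 3*Real.pi*ν/2 := by rw [hζ]; simp
      rw [him] at ha hb
      have hk0 : (0:ℝ) < (k:ℝ) := by nlinarith
      have hk1 : (1:ℤ) ≤ k := by
        have h' : (0:ℤ) < k := by exact_mod_cast hk0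
        omega
      have hk1' : (1:ℝ) ≤ (k:ℝ) := by exact_mod_cast hk1
      nlinarith
    have fac2 : Complex.sin ((ζ - Complex.I * (Real.pi : ℂ) * ν * 3 / 2) / (2 * Complex.I)) ≠ 0 := by
      intro h
      rw [Complex.sin_eq_zero_iff] at h
      obtain ⟨k, hk⟩ := h
      rw [div_eq_iff h2I] at hk
      have hζ : ζ = ((2*(k:ℝ)*Real.pi + 3*Real.pi*ν/2 : ℝ) : ℂ) * Complex.I := by
        push_cast
        linear_combination hk
      have him : ζ.im = 2*(k:ℝ)*Real.pi + 3*Real.pi*ν/2 := by rw [hζ]; simp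
      rw [him] at ha hb
      have hk0 : (k:ℝ) < 0 := by nlinarith
      have hk1 : k ≤ (-1:ℤ) := by
        have h' : k < (0:ℤ) := by exact_mod_cast hk0
        omega
      have hk1' : (k:ℝ) ≤ -1 := by exact_mod_cast hk1
      nlinarith
    have fac3 : Complex.cos ((ζ + Complex.I * (Real.pi : ℂ) * ν / 2) / (2 * Complex.I)) ≠ 0 := by
      intro h
      rw [Complex.cos_eq_zero_iff] at h
      obtain ⟨k, hk⟩ := h
      rw [div_eq_iff h2I] at hk
      have hζ : ζ = (((2*(k:ℝ)+1)*Real.pi - Real.pi*ν/2 : ℝ) : ℂ) * Complex.I := by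
        push_cast
        linear_combination hk
      have him : ζ.im = (2*(k:ℝ)+1)*Real.pi - Real.pi*ν/2 := by rw [hζ]; simp
      rw [him] at ha hb
      have hk0 : k = 0 := int_zero (by nlinarith) (by nlinarith)
      apply hq2
      rw [hζ, hk0, hp₂def]
      push_cast
      ring
    have fac4 : Complex.sin ((ζ - Complex.I * (Real.pi : ℂ) * ν / 2) / (2 * Complex.I)) ≠ 0 := by
      intro h
      rw [Complex.sin_eq_zero_iff] at h
      obtain ⟨k, hk⟩ := h
      rw [div_eq_iff h2I] at hk
      have hζ : ζ = ((2*(k:ℝ)*Real.pi + Real.pi*ν/2 : ℝ) : ℂ) * Complex.I := by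
        push_cast
        linear_combination hk
      have him : ζ.im = 2*(k:ℝ)*Real.pi + Real.pi*ν/2 := by rw [hζ]; simp
      rw [him] at ha hb
      have hk0 : k = 0 := int_zero (by nlinarith) (by nlinarith)
      apply hq1
      rw [hζ, hk0, hp₁def]
      push_cast
      ring
    have hden : ssgDen ν ζ ≠ 0 := by
      unfold ssgDen
      exact mul_ne_zero (mul_ne_zero fac1 fac2) (mul_ne_zero fac3 fac4)
    rw [hfun]
    exact ((ssgNum_diff ν).analyticAt ζ).div ((ssgDen_diff ν).analyticAt ζ) hden
  · -- simple pole at p₁ = iπν/2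
    set g : ℂ → ℂ := fun ζ =>
      Complex.cos ((ζ + Complex.I * (Real.pi : ℂ) * ν * 3 / 2) / (2 * Complex.I)) *
      Complex.sin ((ζ - Complex.I * (Real.pi : ℂ) * ν * 3 / 2) / (2 * Complex.I)) *
      Complex.cos ((ζ + Complex.I * (Real.pi : ℂ) * ν / 2) / (2 * Complex.I)) with hgdef
    have hgcont : Continuous g := by rw [hgdef]; fun_prop
    -- argument computations at p₁
    have eA : (p₁ + Complex.I * (Real.pi : ℂ) * ν * 3 / 2) / (2 * Complex.I) = ((Real.pi * ν : ℝ) : ℂ) := by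
      rw [div_eq_iff h2I, hp₁def]; push_cast; ring
    have eB : (p₁ - Complex.I * (Real.pi : ℂ) * ν * 3 / 2) / (2 * Complex.I) = ((-(Real.pi * ν / 2) : ℝ) : ℂ) := by
      rw [div_eq_iff h2I, hp₁def]; push_cast; ring
    have eC : (p₁ + Complex.I * (Real.pi : ℂ) * ν / 2) / (2 * Complex.I) = ((Real.pi * ν / 2 : ℝ) : ℂ) := by
      rw [div_eq_iff h2I, hp₁def]; push_cast; ring
    have eD : (p₁ - Complex.I * (Real.pi : ℂ) * ν / 2) / (2 * Complex.I) = ((0 : ℝ) : ℂ) := by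
      rw [div_eq_iff h2I, hp₁def]; push_cast; ring
    have hNp : ssgNum ν p₁ ≠ 0 := by
      unfold ssgNum
      rw [eA, eB, eC, eD]
      refine mul_ne_zero (mul_ne_zero (sin_ofReal_ne hsπν) (cos_ofReal_ne ?_))
        (mul_ne_zero (sin_ofReal_ne hsπν2) (cos_ofReal_ne ?_))
      · rw [Real.cos_neg]; exact hcπν2
      · rw [Real.cos_zero]; norm_num
    have hgp : g p₁ ≠ 0 := by
      rw [hgdef]
      simp only
      rw [eA, eB, eC]
      refine mul_ne_zero (mul_ne_zero (cos_ofReal_ne hcπν) (sin_ofReal_ne ?_)) (cos_ofReal_ne hcπν2)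
      rw [Real.sin_neg]; simpa using hsπν2
    have hden : ∀ ζ : ℂ, ssgDen ν ζ = g ζ * Complex.sin ((ζ - p₁) / (2 * Complex.I)) := by
      intro ζ; rw [hgdef, hp₁def]; unfold ssgDen; ring
    have hsplit : ∀ ζ : ℂ, (ζ - p₁) * SSG21 ν ζ =
        (ssgNum ν ζ / g ζ) * ((ζ - p₁) / Complex.sin ((ζ - p₁) / (2 * Complex.I))) := by
      intro ζ
      rw [SSG21_eq, hden, aux_split]
    have t1 : Tendsto (fun ζ => ssgNum ν ζ / g ζ) (𝓝[≠] p₁) (𝓝 (ssgNum ν p₁ / g p₁)) :=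
      (((ssgNum_cont ν).continuousAt.div hgcont.continuousAt hgp).tendsto).mono_left
        nhdsWithin_le_nhds
    refine ⟨ssgNum ν p₁ / g p₁ * (2 * Complex.I),
      mul_ne_zero (div_ne_zero hNp hgp) h2I, ?_⟩
    exact (t1.mul (key_limit p₁)).congr fun ζ => (hsplit ζ).symm
  · -- simple pole at p₂ = iπ(1 - ν/2)
    set g : ℂ → ℂ := fun ζ =>
      Complex.cos ((ζ + Complex.I * (Real.pi : ℂ) * ν * 3 / 2) / (2 * Complex.I)) *
      Complex.sin ((ζ - Complex.I * (Real.pi : ℂ) * ν * 3 / 2) / (2 * Complex.I)) *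
      Complex.sin ((ζ - Complex.I * (Real.pi : ℂ) * ν / 2) / (2 * Complex.I)) with hgdef
    have hgcont : Continuous g := by rw [hgdef]; fun_prop
    have eA : (p₂ + Complex.I * (Real.pi : ℂ) * ν * 3 / 2) / (2 * Complex.I) = ((Real.pi * (1 + ν) / 2 : ℝ) : ℂ) := by
      rw [div_eq_iff h2I, hp₂def]; push_cast; ring
    have eB : (p₂ - Complex.I * (Real.pi : ℂ) * ν * 3 / 2) / (2 * Complex.I) = ((Real.pi * (1 - 2*ν) / 2 : ℝ) : ℂ) := by
      rw [div_eq_iff h2I, hp₂def]; push_cast; ring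
    have eC : (p₂ + Complex.I * (Real.pi : ℂ) * ν / 2) / (2 * Complex.I) = ((Real.pi / 2 : ℝ) : ℂ) := by
      rw [div_eq_iff h2I, hp₂def]; push_cast; ring
    have eD : (p₂ - Complex.I * (Real.pi : ℂ) * ν / 2) / (2 * Complex.I) = ((Real.pi * (1 - ν) / 2 : ℝ) : ℂ) := by
      rw [div_eq_iff h2I, hp₂def]; push_cast; ring
    have hNp : ssgNum ν p₂ ≠ 0 := by
      unfold ssgNum
      rw [eA, eB, eC, eD]
      exact mul_ne_zero (mul_ne_zero (sin_ofReal_ne hsA2) (cos_ofReal_ne hcB2))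
        (mul_ne_zero (sin_ofReal_ne hsC2) (cos_ofReal_ne hcD2))
    have hgp : g p₂ ≠ 0 := by
      rw [hgdef]
      simp only
      rw [eA, eB, eD]
      exact mul_ne_zero (mul_ne_zero (cos_ofReal_ne hcA2) (sin_ofReal_ne hsB2)) (sin_ofReal_ne hsD2)
    have hC : ∀ ζ : ℂ, Complex.cos ((ζ + Complex.I * (Real.pi : ℂ) * ν / 2) / (2 * Complex.I)) =
        -Complex.sin ((ζ - p₂) / (2 * Complex.I)) := by
      intro ζ
      have harg : (ζ + Complex.I * (Real.pi : ℂ) * ν / 2) / (2 * Complex.I) =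
          (ζ - p₂) / (2 * Complex.I) + (Real.pi : ℂ) / 2 := by
        rw [div_add' _ _ _ h2I, div_eq_div_iff h2I h2I, hp₂def]
        push_cast
        ring
      rw [harg, Complex.cos_add, Complex.cos_pi_div_two, Complex.sin_pi_div_two]
      ring
    have hden : ∀ ζ : ℂ, ssgDen ν ζ = -(g ζ * Complex.sin ((ζ - p₂) / (2 * Complex.I))) := by
      intro ζ
      rw [hgdef]
      unfold ssgDen
      rw [hC ζ]
      ring
    have hsplit : ∀ ζ : ℂ, (ζ - p₂) * SSG21 ν ζ =
        -((ssgNum ν ζ / g ζ) * ((ζ - p₂) / Complex.sin ((ζ - p₂) / (2 * Complex.I)))) := by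
      intro ζ
      rw [SSG21_eq, hden, div_neg, mul_neg, aux_split]
    have t1 : Tendsto (fun ζ => ssgNum ν ζ / g ζ) (𝓝[≠] p₂) (𝓝 (ssgNum ν p₂ / g p₂)) :=
      (((ssgNum_cont ν).continuousAt.div hgcont.continuousAt hgp).tendsto).mono_left
        nhdsWithin_le_nhds
    refine ⟨-(ssgNum ν p₂ / g p₂ * (2 * Complex.I)),
      neg_ne_zero.2 (mul_ne_zero (div_ne_zero hNp hgp) h2I), ?_⟩
    exact ((t1.mul (key_limit p₂)).neg).congr fun ζ => (hsplit ζ).symm
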